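/- arXiv:1406.3816 — 7 statements merged into one kernel-verified Lean document; each statement's English description precedes it below -/
import Mathlib

section
/- For all real numbers a, b, c with a ≥ 0, c > 0, and b > 0, we have exp((2ab + b²)/(2c)) ≤ 1 + ab/c + (b²/(2c))·((a+b)²/c + 1)·exp((2ab + b²)/(2c)). -/
/-!
With `x = (2ab + b²)/(2c) = ab/c + b²/(2c) ≥ 0`, the bound
`exp x ≤ 1 + x + x²/2 · exp x` reduces the claim to `x²/2 ≤ b²(a + b)²/(2c²)`, i.e.
`(2a + b)² ≤ 4(a + b)²`, together with `exp x ≥ 1`.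
-/

namespace Real

theorem exp_le_one_add_mul_exp (x : ℝ) : exp x ≤ 1 + x * exp x :=
  calc exp x = (1 - x) * exp x + x * exp x := by ring
    _ ≤ exp (-x) * exp x + x * exp x := by gcongr; linarith [add_one_le_exp (-x)]
    _ = 1 + x * exp x := by rw [← exp_add, neg_add_cancel, exp_zero]

/-- The difference of the two sides vanishes at `0`, and by `exp_le_one_add_mul_exp` its
derivative is at least `x²/2 · exp x ≥ 0`. -/
theorem exp_le_one_add_add_sq_div_two_mul_exp {x : ℝ} (hx : 0 ≤ x) :
    exp x ≤ 1 + x + x ^ 2 / 2 * exp x := by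
  let f : ℝ → ℝ := fun y => 1 + y + y ^ 2 / 2 * exp y - exp y
  have hf' (y : ℝ) : HasDerivAt f (1 + y * exp y - exp y + y ^ 2 / 2 * exp y) y := by
    have := (((hasDerivAt_id y).const_add 1).add
      (((hasDerivAt_pow 2 y).div_const 2).mul (hasDerivAt_exp y))).sub (hasDerivAt_exp y)
    exact this.congr_deriv (by norm_num; ring)
  have hmono : MonotoneOn f (Set.Ici 0) := by
    refine monotoneOn_of_deriv_nonneg (convex_Ici 0)
      (fun y _ => (hf' y).continuousAt.continuousWithinAt)
      (fun y _ => (hf' y).differentiableAt.differentiableWithinAt) fun y _ => ?_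
    rw [(hf' y).deriv]
    nlinarith [exp_le_one_add_mul_exp y, exp_pos y, sq_nonneg y]
  have := hmono Set.self_mem_Ici (Set.mem_Ici.mpr hx) hx
  simp only [f, exp_zero] at this
  linarith

end Real

theorem stmt_0 (a b c : ℝ) (ha : 0 ≤ a) (hc : 0 < c) (hb : 0 < b) :
    Real.exp ((2 * a * b + b ^ 2) / (2 * c)) ≤
      1 + a * b / c +
        b ^ 2 / (2 * c) * ((a + b) ^ 2 / c + 1) *
          Real.exp ((2 * a * b + b ^ 2) / (2 * c)) := by
  set x := (2 * a * b + b ^ 2) / (2 * c) with hx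
  have hx_split : x = a * b / c + b ^ 2 / (2 * c) := by rw [hx]; field_simp
  have hsq : x ^ 2 / 2 ≤ b ^ 2 / (2 * c) * ((a + b) ^ 2 / c) := by
    have : x ^ 2 / 2 = b ^ 2 / (2 * c) * ((2 * a + b) ^ 2 / (4 * c)) := by
      rw [hx]; field_simp; ring
    rw [this]
    refine mul_le_mul_of_nonneg_left ?_ (by positivity)
    rw [div_le_div_iff₀ (by positivity) hc]
    nlinarith [mul_nonneg hc.le (mul_nonneg hb.le (by positivity : 0 ≤ 4 * a + 3 * b))]
  have hexp : 1 ≤ Real.exp x := Real.one_le_exp (by positivity)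
  calc Real.exp x ≤ 1 + x + x ^ 2 / 2 * Real.exp x :=
        Real.exp_le_one_add_add_sq_div_two_mul_exp (by positivity)
    _ ≤ 1 + a * b / c + b ^ 2 / (2 * c) * Real.exp x
          + b ^ 2 / (2 * c) * ((a + b) ^ 2 / c) * Real.exp x := by
        have hquad := mul_le_mul_of_nonneg_right hsq (Real.exp_pos x).le
        have hlin := le_mul_of_one_le_right (by positivity : 0 ≤ b ^ 2 / (2 * c)) hexp
        linarith
    _ = _ := by ring
end

section
/- For all real numbers a, b, c with a ≥ 0, c > 0, and b ≤ 0, we have exp((2ab + b²)/(2c)) ≤ 1 + ab/c + (b²/(2c))·((a² + b²)/c + 1)·exp(b²/(2c)). -/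
/-!
Split the exponent as `x + y` with `x = ab/c ≤ 0` and `y = b²/(2c) ≥ 0`. On `x ≤ 0` the exponential
lies below its second Taylor polynomial, and `eʸ - 1 ≤ y eʸ`; together they give
`e^(x+y) ≤ 1 + x + (x²/2 + y) eʸ`. Since `x²/2 = (a²/c) y`, the claimed bound exceeds this
by `y (b²/c) eʸ ≥ 0`.
-/

namespace Real

/-- For `t = -x ≥ 0`, `(1 - t + t²/2)(1 + t + t²/2) = 1 + t⁴/4 ≥ 1` and `1 + t + t²/2 ≤ eᵗ`. -/
theorem exp_le_one_add_add_sq_div_two_of_nonpos {x : ℝ} (hx : x ≤ 0) :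
    exp x ≤ 1 + x + x ^ 2 / 2 := by
  have h := quadratic_le_exp_of_nonneg (neg_nonneg.2 hx)
  rw [← inv_inv (exp x), ← exp_neg, inv_le_iff_one_le_mul₀ (exp_pos _)]
  nlinarith [sq_nonneg (x ^ 2)]

theorem exp_sub_one_le_mul_exp (y : ℝ) : exp y - 1 ≤ y * exp y := by
  have h := mul_le_mul_of_nonneg_left (one_sub_le_exp_neg y) (exp_pos y).le
  rw [← exp_add, add_neg_cancel, exp_zero] at h
  linarith

theorem exp_add_le_of_nonpos_of_nonneg {x y : ℝ} (hx : x ≤ 0) (hy : 0 ≤ y) :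
    exp (x + y) ≤ 1 + x + (x ^ 2 / 2 + y) * exp y := by
  have hey : 1 ≤ exp y := one_le_exp hy
  calc exp (x + y) = exp x * exp y := exp_add x y
    _ ≤ (1 + x + x ^ 2 / 2) * exp y :=
      mul_le_mul_of_nonneg_right (exp_le_one_add_add_sq_div_two_of_nonpos hx) (exp_pos y).le
    _ = 1 + x + (1 + x) * (exp y - 1) + x ^ 2 / 2 * exp y := by ring
    _ ≤ 1 + x + (exp y - 1) + x ^ 2 / 2 * exp y := by nlinarith
    _ ≤ 1 + x + (x ^ 2 / 2 + y) * exp y := by nlinarith [exp_sub_one_le_mul_exp y]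

end Real

theorem stmt_1 (a b c : ℝ) (ha : 0 ≤ a) (hc : 0 < c) (hb : b ≤ 0) :
    Real.exp ((2 * a * b + b ^ 2) / (2 * c)) ≤
      1 + a * b / c +
        b ^ 2 / (2 * c) * ((a ^ 2 + b ^ 2) / c + 1) *
          Real.exp (b ^ 2 / (2 * c)) := by
  have hx : a * b / c ≤ 0 :=
    div_nonpos_of_nonpos_of_nonneg (mul_nonpos_of_nonneg_of_nonpos ha hb) hc.le
  have hy : 0 ≤ b ^ 2 / (2 * c) := by positivity
  have hcoeff : (a * b / c) ^ 2 / 2 + b ^ 2 / (2 * c) ≤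
      b ^ 2 / (2 * c) * ((a ^ 2 + b ^ 2) / c + 1) := by
    have hgap : b ^ 2 / (2 * c) * ((a ^ 2 + b ^ 2) / c + 1) -
        ((a * b / c) ^ 2 / 2 + b ^ 2 / (2 * c)) = b ^ 4 / (2 * c ^ 2) := by
      field_simp
      ring
    have : 0 ≤ b ^ 4 / (2 * c ^ 2) := by positivity
    linarith
  calc Real.exp ((2 * a * b + b ^ 2) / (2 * c)) = Real.exp (a * b / c + b ^ 2 / (2 * c)) := by
        congr 1
        field_simp
    _ ≤ 1 + a * b / c + ((a * b / c) ^ 2 / 2 + b ^ 2 / (2 * c)) * Real.exp (b ^ 2 / (2 * c)) :=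
        Real.exp_add_le_of_nonpos_of_nonneg hx hy
    _ ≤ _ := by gcongr
end

section
/- For every δ > 0 and every finite sequence x₁, …, x_T of nonnegative reals, the sum over t = 1 to T of x_t / (δ + Σ_{i=1}^{t} x_i) is at most log(1 + (Σ_{t=1}^{T} x_t)/δ). -/
theorem stmt_2 (δ : ℝ) (hδ : 0 < δ) (T : ℕ) (x : ℕ → ℝ) (hx : ∀ t, 0 ≤ x t) :
    ∑ t ∈ Finset.range T, x t / (δ + ∑ i ∈ Finset.range (t + 1), x i) ≤
      Real.log (1 + (∑ t ∈ Finset.range T, x t) / δ) := by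
  set S : ℕ → ℝ := fun t => δ + ∑ i ∈ Finset.range t, x i with hS
  have hSpos : ∀ t, 0 < S t := fun t =>
    add_pos_of_pos_of_nonneg hδ (Finset.sum_nonneg fun i _ => hx i)
  have key : ∑ t ∈ Finset.range T, x t / S (t + 1) ≤ Real.log (S T) - Real.log (S 0) := by
    induction T with
    | zero => simp
    | succ n ih =>
      rw [Finset.sum_range_succ]
      have step : x n / S (n + 1) ≤ Real.log (S (n + 1)) - Real.log (S n) := by
        have h1 : Real.log (S n / S (n + 1)) ≤ S n / S (n + 1) - 1 :=
          Real.log_le_sub_one_of_pos (div_pos (hSpos n) (hSpos (n + 1)))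
        rw [Real.log_div (hSpos n).ne' (hSpos (n + 1)).ne'] at h1
        have h2 : S (n + 1) - S n = x n := by
          show (δ + ∑ i ∈ Finset.range (n+1), x i) - (δ + ∑ i ∈ Finset.range n, x i) = x n
          rw [Finset.sum_range_succ]; ring
        have h3 : x n / S (n + 1) = 1 - S n / S (n + 1) := by
          rw [← h2, sub_div, div_self (hSpos (n + 1)).ne']
        rw [h3]; linarith
      linarith
  have hfin : Real.log (S T) - Real.log (S 0) =
      Real.log (1 + (∑ t ∈ Finset.range T, x t) / δ) := by
    rw [← Real.log_div (hSpos T).ne' (hSpos 0).ne']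
    congr 1
    simp only [hS, Finset.range_zero, Finset.sum_empty, add_zero]
    field_simp
  calc ∑ t ∈ Finset.range T, x t / (δ + ∑ i ∈ Finset.range (t + 1), x i)
      = ∑ t ∈ Finset.range T, x t / S (t + 1) := rfl
    _ ≤ _ := key.trans_eq hfin
end

section
/- Let a, b, c > 0 and 0 < α < 1. If a real number x ≥ 0 satisfies x − a·(x + b)^α − c ≤ 0, then x ≤ a·max{(2a)^{α/(1−α)}, (2(b + c))^α} + b + c. -/
/-! With `y = x + b` the hypothesis reads `y ≤ a y^α + (b + c)`. Either `b + c ≤ a y^α`, so that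
`y ≤ 2a y^α`, i.e. `y^(1-α) ≤ 2a`; or `a y^α < b + c`, so that `y < 2(b + c)`. In both cases `y^α`
is at most the maximum in the statement, and `x ≤ a y^α + c`. -/

namespace Real

lemma rpow_le_rpow_div_one_sub_of_le_mul_rpow {y k α : ℝ} (hy : 0 < y) (hα0 : 0 ≤ α)
    (hα1 : α < 1) (h : y ≤ k * y ^ α) : y ^ α ≤ k ^ (α / (1 - α)) := by
  have hα1' : 0 < 1 - α := sub_pos.mpr hα1
  have hyk : y ^ (1 - α) ≤ k := by
    rw [rpow_sub hy, rpow_one, div_le_iff₀ (rpow_pos_of_pos hy α)]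
    exact h
  calc y ^ α = (y ^ (1 - α)) ^ (α / (1 - α)) := by
        rw [← rpow_mul hy.le, mul_div_cancel₀ α hα1'.ne']
    _ ≤ k ^ (α / (1 - α)) := rpow_le_rpow (rpow_nonneg hy.le _) hyk (div_nonneg hα0 hα1'.le)

lemma rpow_le_max_of_le_mul_rpow_add {y a d α : ℝ} (hy : 0 < y) (hα0 : 0 ≤ α) (hα1 : α < 1)
    (h : y ≤ a * y ^ α + d) : y ^ α ≤ max ((2 * a) ^ (α / (1 - α))) ((2 * d) ^ α) := by
  rcases le_or_gt d (a * y ^ α) with hd | hd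
  · refine le_max_of_le_left (rpow_le_rpow_div_one_sub_of_le_mul_rpow hy hα0 hα1 ?_)
    linarith
  · exact le_max_of_le_right (rpow_le_rpow hy.le (by linarith) hα0)

end Real

theorem stmt_7_general (a b c α x : ℝ) (ha : 0 < a) (hb : 0 < b)
    (hα0 : 0 < α) (hα1 : α < 1) (hx : 0 ≤ x)
    (h : x - a * (x + b) ^ α - c ≤ 0) :
    x ≤ a * max ((2 * a) ^ (α / (1 - α))) ((2 * (b + c)) ^ α) + b + c := by
  have hy : 0 < x + b := by positivity
  have hM := Real.rpow_le_max_of_le_mul_rpow_add (a := a) (d := b + c) hy hα0.le hα1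
    (by linarith)
  linarith [mul_le_mul_of_nonneg_left hM ha.le]

theorem stmt_7 (a b c α x : ℝ) (ha : 0 < a) (hb : 0 < b) (hc : 0 < c)
    (hα0 : 0 < α) (hα1 : α < 1) (hx : 0 ≤ x)
    (h : x - a * (x + b) ^ α - c ≤ 0) :
    x ≤ a * max ((2 * a) ^ (α / (1 - α))) ((2 * (b + c)) ^ α) + b + c :=
  stmt_7_general a b c α x ha hb hα0 hα1 hx h
end

section
/- Let c₁, …, c_l > 0 and s > q₁ > q₂ > … > q_{l−1} > 0. The equation x^s − c₁ x^{q₁} − c₂ x^{q₂} − … − c_{l−1} x^{q_{l−1}} − c_l = 0 has a unique positive solution x*, and x* ≤ max{(l·c₁)^{1/(s−q₁)}, (l·c₂)^{1/(s−q₂)}, …, (l·c_{l−1})^{1/(s−q_{l−1})}, (l·c_l)^{1/s}}. -/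
/-- Reformulation of Lemma 7.2 of Cucker–Zhou: the constant term `c_l` is
encoded as `c_l · x^{q_l}` with `q_l = 0`, so the exponents satisfy
`s > q₀ > q₁ > ⋯ > q_{l-1} = 0`. -/
theorem stmt_8 (l : ℕ) (hl : 1 ≤ l) (c : Fin l → ℝ) (hc : ∀ i, 0 < c i)
    (s : ℝ) (q : Fin l → ℝ) (hq0 : ∀ i, 0 ≤ q i) (hqs : ∀ i, q i < s)
    (hanti : StrictAnti q) (hlast : q ⟨l - 1, by omega⟩ = 0) :
    (∃! x : ℝ, 0 < x ∧ x ^ s - ∑ i, c i * x ^ (q i) = 0) ∧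
      ∀ x : ℝ, 0 < x → x ^ s - ∑ i, c i * x ^ (q i) = 0 →
        x ≤ Finset.univ.sup' ⟨⟨0, by omega⟩, Finset.mem_univ _⟩
              (fun i => ((l : ℝ) * c i) ^ (1 / (s - q i))) := by
  have hs : 0 < s := by
    have := hqs ⟨l - 1, by omega⟩
    rw [hlast] at this; exact this
  have hlpos : (0 : ℝ) < l := by exact_mod_cast hl
  set f : ℝ → ℝ := fun x => ∑ i, c i * x ^ (q i - s) with hf
  set M : ℝ := Finset.univ.sup' ⟨⟨0, by omega⟩, Finset.mem_univ _⟩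
      (fun i => ((l : ℝ) * c i) ^ (1 / (s - q i))) with hM
  -- positivity of M
  have hMi : ∀ i, ((l : ℝ) * c i) ^ (1 / (s - q i)) ≤ M := by
    intro i; rw [hM]
    exact Finset.le_sup' (fun i => ((l : ℝ) * c i) ^ (1 / (s - q i)))
      (Finset.mem_univ i)
  have hMpos : 0 < M := by
    refine lt_of_lt_of_le ?_ (hMi ⟨0, by omega⟩)
    exact Real.rpow_pos_of_pos (mul_pos hlpos (hc _)) _
  -- equation ↔ f x = 1
  have hiff : ∀ x : ℝ, 0 < x →
      ((x ^ s - ∑ i, c i * x ^ (q i) = 0) ↔ f x = 1) := by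
    intro x hx
    have hxs : (0:ℝ) < x ^ s := Real.rpow_pos_of_pos hx _
    have : f x = (∑ i, c i * x ^ (q i)) / x ^ s := by
      rw [Finset.sum_div]
      refine Finset.sum_congr rfl fun i _ => ?_
      rw [Real.rpow_sub hx, mul_div_assoc]
    rw [this, div_eq_one_iff_eq hxs.ne', sub_eq_zero, eq_comm]
  -- f strictly decreasing on positives
  have hfanti : ∀ x y : ℝ, 0 < x → x < y → f y < f x := by
    intro x y hx hxy
    refine Finset.sum_lt_sum_of_nonempty ⟨⟨0, by omega⟩, Finset.mem_univ _⟩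
      fun i _ => ?_
    exact mul_lt_mul_of_pos_left
      (Real.rpow_lt_rpow_of_neg hx hxy (by linarith [hqs i])) (hc i)
  -- f M ≤ 1
  have hfM : f M ≤ 1 := by
    have h1 : ∀ i : Fin l, c i * M ^ (q i - s) ≤ 1 / l := by
      intro i
      have he : (0:ℝ) < s - q i := by linarith [hqs i]
      have hMs : (l : ℝ) * c i ≤ M ^ (s - q i) := by
        calc (l : ℝ) * c i
            = (((l : ℝ) * c i) ^ (1 / (s - q i))) ^ (s - q i) := by
              rw [one_div, Real.rpow_inv_rpow (mul_pos hlpos (hc i)).le he.ne']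
          _ ≤ M ^ (s - q i) :=
              Real.rpow_le_rpow (Real.rpow_pos_of_pos (mul_pos hlpos (hc i)) _).le (hMi i) he.le
      have hMspos : (0:ℝ) < M ^ (s - q i) := Real.rpow_pos_of_pos hMpos _
      have : M ^ (q i - s) = (M ^ (s - q i))⁻¹ := by
        rw [← Real.rpow_neg hMpos.le]; ring_nf
      rw [this]
      rw [mul_inv_le_iff₀ hMspos, div_mul_eq_mul_div, le_div_iff₀ hlpos]
      linarith
    calc f M ≤ ∑ _i : Fin l, (1 : ℝ) / l := Finset.sum_le_sum fun i _ => h1 i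
      _ = 1 := by
        rw [Finset.sum_const, Finset.card_univ, Fintype.card_fin, nsmul_eq_mul]
        field_simp
  -- small point a with f a ≥ 1
  set cl : ℝ := c ⟨l - 1, by omega⟩ with hcl
  have hclpos : 0 < cl := hc _
  set a : ℝ := min M (cl ^ (1 / s)) with ha
  have hapos : 0 < a := lt_min hMpos (Real.rpow_pos_of_pos hclpos _)
  have haM : a ≤ M := min_le_left _ _
  have hfa : 1 ≤ f a := by
    have has : a ^ s ≤ cl := by
      calc a ^ s ≤ (cl ^ (1 / s)) ^ s :=
            Real.rpow_le_rpow hapos.le (min_le_right _ _) hs.le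
        _ = cl := by rw [one_div, Real.rpow_inv_rpow hclpos.le hs.ne']
    have haspos : (0:ℝ) < a ^ s := Real.rpow_pos_of_pos hapos _
    have hterm : 1 ≤ cl * a ^ (q ⟨l - 1, by omega⟩ - s) := by
      rw [hlast, zero_sub, Real.rpow_neg hapos.le, ← div_eq_mul_inv,
        le_div_iff₀ haspos, one_mul]
      exact has
    refine le_trans hterm ?_
    exact Finset.single_le_sum (f := fun i => c i * a ^ (q i - s))
      (fun i _ => (mul_pos (hc i) (Real.rpow_pos_of_pos hapos _)).le) (Finset.mem_univ _)
  -- continuity on [a, M]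
  have hcont : ContinuousOn f (Set.Icc a M) := by
    refine continuousOn_finset_sum _ fun i _ =>
      continuousOn_const.mul (continuousOn_id.rpow_const fun x hx => ?_)
    exact Or.inl (show x ≠ 0 from ne_of_gt (lt_of_lt_of_le hapos hx.1))
  -- existence
  obtain ⟨x₀, hx₀mem, hx₀⟩ :=
    intermediate_value_Icc' haM hcont (Set.mem_Icc.mpr ⟨hfM, hfa⟩)
  have hx₀pos : 0 < x₀ := lt_of_lt_of_le hapos hx₀mem.1
  -- main
  constructor
  · refine ⟨x₀, ⟨hx₀pos, (hiff x₀ hx₀pos).mpr hx₀⟩, ?_⟩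
    rintro y ⟨hy, hyeq⟩
    have hfy : f y = 1 := (hiff y hy).mp hyeq
    rcases lt_trichotomy y x₀ with h | h | h
    · have := hfanti y x₀ hy h; rw [hfy, hx₀] at this; linarith
    · exact h
    · have := hfanti x₀ y hx₀pos h; rw [hfy, hx₀] at this; linarith
  · intro x hx hxeq
    have hfx : f x = 1 := (hiff x hx).mp hxeq
    by_contra hlt
    push_neg at hlt
    have := hfanti M x hMpos hlt
    rw [hfx] at this
    linarith
end

section
/- Let H be a real Hilbert space and define Ψ : H → ℝ by Ψ(g) = b·exp(‖g‖²/(2α)) for constants α, b > 0. Then its Fenchel conjugate satisfies Ψ*(f) ≤ ‖f‖·sqrt(2α·log(√α·‖f‖/b + 1)) − b for every f ∈ H. -/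
/-!
Bound `⟪f, g⟫` by `‖f‖ ‖g‖`, which reduces the claim to the one-dimensional inequality
`r t - b exp (t² / 2a²) ≤ r M - b` for real `t`, where `a = √α`, `r = ‖f‖` and `M` is the point with
`b exp (M² / 2a²) = a r + b`. For `t ≤ M` it is immediate since `exp ≥ 1`. For `t > M` the bound
`exp y ≥ exp x (1 + y - x)` linearises the exponential at `M²/2a²`; the surplus `a r` in
`b exp (M² / 2a²)` then pays for the linear gain `r (t - M)`, because `s ≤ a + s² / 2a`.
-/

open scoped RealInnerProductSpace

open Real

lemma exp_mul_one_add_sub_le_exp (x y : ℝ) : exp x * (1 + (y - x)) ≤ exp y :=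
  calc exp x * (1 + (y - x)) ≤ exp x * exp (y - x) := by
        gcongr
        linarith [add_one_le_exp (y - x)]
    _ = exp y := by rw [← exp_add, add_sub_cancel]

lemma exp_sqrt_two_mul_log_sq_div {κ x : ℝ} (hκ : 0 < κ) (hx : 1 ≤ x) :
    exp (√(2 * κ * log x) ^ 2 / (2 * κ)) = x := by
  have hlog : 0 ≤ log x := log_nonneg hx
  rw [sq_sqrt (by positivity), mul_div_cancel_left₀ _ (by positivity), exp_log (by linarith)]

lemma mul_sub_mul_exp_sq_div_le {a b r M t : ℝ} (ha : 0 < a) (hb : 0 ≤ b) (hr : 0 ≤ r)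
    (hM : 0 ≤ M) (hbM : b * exp (M ^ 2 / (2 * a ^ 2)) = a * r + b) :
    r * t - b * exp (t ^ 2 / (2 * a ^ 2)) ≤ r * M - b := by
  rcases le_or_gt t M with htM | hMt
  · have h_one : 1 ≤ exp (t ^ 2 / (2 * a ^ 2)) := one_le_exp (by positivity)
    nlinarith [mul_le_mul_of_nonneg_left htM hr]
  set E := t ^ 2 / (2 * a ^ 2) - M ^ 2 / (2 * a ^ 2) with hE
  have h_lin : (a * r + b) * (1 + E) ≤ b * exp (t ^ 2 / (2 * a ^ 2)) := by
    rw [← hbM, mul_assoc]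
    exact mul_le_mul_of_nonneg_left (exp_mul_one_add_sub_le_exp _ _) hb
  have h_E : 2 * a ^ 2 * E = (t - M) * (t + M) := by
    rw [hE]; field_simp; ring
  have h_gain : r * (t - M) ≤ a * r + (a * r + b) * E := by
    have h_sq : (t - M) ^ 2 ≤ 2 * a ^ 2 * E := by rw [h_E]; nlinarith
    have h_bE : 0 ≤ b * E := mul_nonneg hb (sub_nonneg.mpr (by gcongr))
    -- `2 a s ≤ 2 a² + s²` with `s = t - M`, multiplied by `r ≥ 0`
    nlinarith [mul_nonneg hr (sq_nonneg (t - M - a)), mul_le_mul_of_nonneg_left h_sq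
      (mul_nonneg ha.le hr)]
  linarith

theorem stmt_9 {H : Type*} [NormedAddCommGroup H] [InnerProductSpace ℝ H]
    (α b : ℝ) (hα : 0 < α) (hb : 0 < b) (f : H) :
    (⨆ g : H, (⟪f, g⟫ - b * Real.exp (‖g‖ ^ 2 / (2 * α)))) ≤
      ‖f‖ * Real.sqrt (2 * α * Real.log (Real.sqrt α * ‖f‖ / b + 1)) - b := by
  have ha : 0 < √α := sqrt_pos.mpr hα
  have h_sq : √α ^ 2 = α := sq_sqrt hα.le
  have h_one : 1 ≤ √α * ‖f‖ / b + 1 := by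
    have : 0 ≤ √α * ‖f‖ / b := by positivity
    linarith
  have hbM : b * exp (√(2 * α * log (√α * ‖f‖ / b + 1)) ^ 2 / (2 * √α ^ 2))
      = √α * ‖f‖ + b := by
    rw [h_sq, exp_sqrt_two_mul_log_sq_div hα h_one]
    field_simp
  refine ciSup_le fun g => ?_
  have h := mul_sub_mul_exp_sq_div_le ha hb.le (norm_nonneg f) (sqrt_nonneg _) hbM (t := ‖g‖)
  rw [h_sq] at h
  linarith [real_inner_le_norm f g]
end

section
/- Let h^* minimize L(f) = ‖f‖·sqrt(2α·log(√α‖f‖/b + 1)) + q(f) over a real Hilbert space H, where α, b > 0 and q : H → ℝ satisfies q(f) ≥ q_min for all f and L(h^*) ≤ L(0) = q(0). Assume q ≥ 0. Then √α·‖h^*‖ ≤ 2^{−1/2}·q(0) + b. -/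
/-!
Comparing with the competitor `0` gives `φ(‖h*‖) ≤ q 0` for the penalty
`φ(t) = t √(2α log(√α t / b + 1))`. The bound `log (1 + x) ≥ x / (1 + x)` yields
`φ(t) ≥ √2 y² / (y + b)` with `y = √α t`, and the quadratic inequality
`y² ≤ c (y + b)` forces `y ≤ c + b`.
-/

open Real

lemma Real.div_add_one_le_log_add_one {x : ℝ} (hx : 0 ≤ x) : x / (x + 1) ≤ log (x + 1) := by
  have h := one_sub_inv_le_log_of_pos (x := x + 1) (by linarith)
  have hx1 : x + 1 ≠ 0 := by positivity
  rwa [show 1 - (x + 1)⁻¹ = x / (x + 1) by field_simp; ring] at h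

lemma Real.sqrt_mul_div_add_one_le_sqrt_mul_log {c x : ℝ} (hc : 0 ≤ c) (hx : 0 ≤ x) :
    √c * (x / (x + 1)) ≤ √(c * log (x + 1)) := by
  have hs0 : 0 ≤ x / (x + 1) := by positivity
  have hs1 : x / (x + 1) ≤ 1 := (div_le_one (by linarith)).2 (by linarith)
  rw [le_sqrt (by positivity) (mul_nonneg hc (hs0.trans (div_add_one_le_log_add_one hx))),
    mul_pow, sq_sqrt hc]
  gcongr
  calc (x / (x + 1)) ^ 2 ≤ x / (x + 1) := by nlinarith
    _ ≤ log (x + 1) := div_add_one_le_log_add_one hx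

lemma sqrt_two_mul_sq_div_le_mul_sqrt_log {α b t : ℝ} (hα : 0 < α) (hb : 0 < b) (ht : 0 ≤ t) :
    √2 * (√α * t) ^ 2 / (√α * t + b) ≤ t * √(2 * α * log (√α * t / b + 1)) := by
  have hy : 0 ≤ √α * t := by positivity
  have key := Real.sqrt_mul_div_add_one_le_sqrt_mul_log (c := 2 * α) (by positivity)
    (div_nonneg hy hb.le)
  calc √2 * (√α * t) ^ 2 / (√α * t + b)
      = t * (√(2 * α) * (√α * t / b / (√α * t / b + 1))) := by
        rw [sqrt_mul zero_le_two]
        field_simp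
    _ ≤ t * √(2 * α * log (√α * t / b + 1)) := by gcongr

lemma le_add_of_sq_le_mul_add {y c b : ℝ} (hc : 0 ≤ c) (hb : 0 ≤ b)
    (h : y ^ 2 ≤ c * (y + b)) : y ≤ c + b := by
  nlinarith

theorem stmt_14 {H : Type*} [NormedAddCommGroup H] [InnerProductSpace ℝ H]
    (α b : ℝ) (hα : 0 < α) (hb : 0 < b)
    (q : H → ℝ) (hq : ∀ f, 0 ≤ q f) (hstar : H)
    (hmin : ∀ f : H,
      ‖hstar‖ * Real.sqrt (2 * α * Real.log (Real.sqrt α * ‖hstar‖ / b + 1)) + q hstar ≤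
        ‖f‖ * Real.sqrt (2 * α * Real.log (Real.sqrt α * ‖f‖ / b + 1)) + q f) :
    Real.sqrt α * ‖hstar‖ ≤ (2 : ℝ) ^ (-(1 / 2) : ℝ) * q 0 + b := by
  have hpenalty : ‖hstar‖ * √(2 * α * log (√α * ‖hstar‖ / b + 1)) ≤ q 0 := by
    have := hmin 0
    simp only [norm_zero, mul_zero, zero_mul, zero_div, zero_add, log_one] at this
    linarith [hq hstar]
  have hquad := (sqrt_two_mul_sq_div_le_mul_sqrt_log hα hb (norm_nonneg hstar)).trans hpenalty
  have hs2 : (0 : ℝ) < √2 := by positivity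
  rw [rpow_neg zero_le_two, ← sqrt_eq_rpow]
  refine le_add_of_sq_le_mul_add (mul_nonneg (by positivity) (hq 0)) hb.le ?_
  rw [div_le_iff₀ (by positivity)] at hquad
  rw [inv_mul_eq_div, div_mul_eq_mul_div, le_div_iff₀ hs2]
  linarith
end
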